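/- The function q1(x) = 2(x^6 + 6x^5 - 3x^4 - 16x^3 - 21x^2 - 6x - 1) ψ'(x+1) + (x+1)(x^2+1)(x^4 + 4x^3 - 2x^2 - 4x - 3) ψ''(x+1) is strictly decreasing on [0,1]. -/

import Mathlib

/-- The digamma function ψ = (log ∘ Γ)'. -/
noncomputable def digamma : ℝ → ℝ := deriv fun x => Real.log (Real.Gamma x)

/-- The k-th derivative of the digamma function. -/
noncomputable def polygamma (k : ℕ) : ℝ → ℝ := iteratedDeriv k digamma

/-!
Differentiating the Euler limit formula for `log Γ` termwise gives
`ψ(x) = -γ + ∑ₘ (1/(m+1) - 1/(x+m))`, hence `ψ'(x) = ∑ₘ (x+m)⁻²` and `ψ''(x) = -2 ∑ₘ (x+m)⁻³`.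
Writing `q1(x) = 2P(x) ψ'(x+1) + Q(x) ψ''(x+1)`, this makes
`q1(x) = ∑ₘ (2P(x)/(x+1+m)² - 2Q(x)/(x+1+m)³)`, and it suffices that every summand is strictly
decreasing on `[0,1]`. The derivative of the `m`-th summand is `N(x, a)/a⁴` with `a = x+1+m`,
where `N` is quadratic in `a`; expanding `N` around `a = x + 1` gives three polynomial
coefficients in `x`, each negative on `[0,1]`.
-/

open Real Set Filter Topology

noncomputable def hurwitzSum (k : ℕ) (t : ℝ) : ℝ := ∑' m : ℕ, ((t + m) ^ k)⁻¹

lemma summable_inv_add_pow {k : ℕ} (hk : 2 ≤ k) (t : ℝ) :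
    Summable fun m : ℕ => ((t + m) ^ k)⁻¹ := by
  refine Summable.of_norm ?_
  have := (Real.summable_one_div_nat_add_rpow t k).2 (by exact_mod_cast hk)
  simpa [Real.rpow_natCast, add_comm, one_div] using this

lemma hasDerivAt_inv_add_pow (k m : ℕ) {x : ℝ} (hx : x + m ≠ 0) :
    HasDerivAt (fun y : ℝ => ((y + m) ^ k)⁻¹) (-k * ((x + m) ^ (k + 1))⁻¹) x := by
  refine ((((hasDerivAt_id x).add_const (m : ℝ)).pow k).inv (pow_ne_zero k hx)).congr_deriv ?_
  rcases k with _ | k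
  · simp
  · simp only [id_eq, Pi.pow_apply, Nat.add_sub_cancel, mul_one]
    field_simp
    ring

lemma hasDerivAt_hurwitzSum {k : ℕ} (hk : 2 ≤ k) {t : ℝ} (ht : 0 < t) :
    HasDerivAt (hurwitzSum k) (-k * hurwitzSum (k + 1) t) t := by
  have hpos : ∀ m : ℕ, ∀ y ∈ Ioi (t / 2), 0 < y + m := fun m y (hy : t / 2 < y) =>
    add_pos_of_pos_of_nonneg (by linarith) m.cast_nonneg
  have ht' : t ∈ Ioi (t / 2) := by simp only [mem_Ioi]; linarith
  rw [hurwitzSum, ← tsum_mul_left]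
  refine hasDerivAt_tsum_of_isPreconnected
    ((summable_inv_add_pow (k := k + 1) (by omega) (t / 2)).mul_left (k : ℝ))
    isOpen_Ioi isPreconnected_Ioi (fun m y hy => hasDerivAt_inv_add_pow k m (hpos m y hy).ne')
    (fun m y hy => ?_) ht' (summable_inv_add_pow hk t) ht'
  rw [norm_mul, norm_neg, norm_inv, norm_pow, Real.norm_natCast,
    Real.norm_of_nonneg (hpos m y hy).le]
  have : t / 2 < y := hy
  gcongr

section Digamma

open Real.BohrMollerup

lemma abs_inv_succ_sub_inv_add_le {a u : ℝ} (m : ℕ) (ha : 0 < a) (hau : a ≤ u) (ha1 : a ≤ 1) :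
    |((m : ℝ) + 1)⁻¹ - (u + m)⁻¹| ≤ |u - 1| * ((a + m) ^ 2)⁻¹ := by
  have ham : 0 < a + m := by positivity
  have hum : 0 < u + m := by linarith
  have hsplit : ((m : ℝ) + 1)⁻¹ - (u + m)⁻¹ = (u - 1) * (((m : ℝ) + 1) * (u + m))⁻¹ := by
    field_simp
    ring
  rw [hsplit, abs_mul, abs_inv, abs_of_pos (by positivity : (0 : ℝ) < ((m : ℝ) + 1) * (u + m))]
  gcongr
  rw [sq]
  exact mul_le_mul (by linarith) (by linarith) ham.le (by positivity)

lemma tendsto_log_sub_harmonic_succ :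
    Tendsto (fun n : ℕ => Real.log n - harmonic (n + 1)) atTop (𝓝 (-eulerMascheroniConstant)) := by
  have h := (tendsto_harmonic_sub_log.add
    ((tendsto_inv_atTop_nhds_zero_nat (𝕜 := ℝ)).comp (tendsto_add_atTop_nat 1))).neg
  rw [add_zero] at h
  refine h.congr fun n => ?_
  simp only [Function.comp_apply, harmonic_succ]
  push_cast
  ring

lemma hasDerivAt_logGammaSeq (n : ℕ) {x : ℝ} (hx : 0 < x) :
    HasDerivAt (fun y => logGammaSeq y n)
      (Real.log n - ∑ m ∈ Finset.range (n + 1), (x + m)⁻¹) x := by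
  have hlog : ∀ m ∈ Finset.range (n + 1),
      HasDerivAt (fun y : ℝ => Real.log (y + m)) (x + m)⁻¹ x := fun m _ => by
    simpa using ((hasDerivAt_id x).add_const (m : ℝ)).log (by positivity)
  exact (((hasDerivAt_mul_const (Real.log n)).add_const _).sub
    (HasDerivAt.fun_sum hlog)).congr_deriv (by simp)

lemma hasDerivAt_log_Gamma {x : ℝ} (hx : 0 < x) :
    HasDerivAt (fun y => Real.log (Gamma y))
      (-eulerMascheroniConstant + ∑' m : ℕ, (((m : ℝ) + 1)⁻¹ - (x + m)⁻¹)) x := by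
  set a := min x 1 / 2 with ha_def
  have ha : 0 < a := by positivity
  have hax : a < x := by linarith [min_le_left x 1]
  have ha1 : a ≤ 1 := by linarith [min_le_right x 1]
  have hbound : ∀ (m : ℕ) (u : ℝ), u ∈ Ioo a (x + 1) →
      ‖((m : ℝ) + 1)⁻¹ - (u + m)⁻¹‖ ≤ (x + 1) * ((a + m) ^ 2)⁻¹ := fun m u hu => by
    refine (abs_inv_succ_sub_inv_add_le m ha hu.1.le ha1).trans ?_
    gcongr
    exact abs_le.2 ⟨by linarith [hu.1], by linarith [hu.2]⟩
  have hpartial := tendstoUniformlyOn_tsum_nat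
    ((summable_inv_add_pow le_rfl a).mul_left (x + 1)) hbound
  -- `log n - ∑_{m ≤ n} (u + m)⁻¹ = (log n - H_{n+1}) + ∑_{m ≤ n} ((m + 1)⁻¹ - (u + m)⁻¹)`
  refine hasDerivAt_of_tendstoUniformlyOn isOpen_Ioo
    (f := fun n y => logGammaSeq y n)
    ((tendsto_log_sub_harmonic_succ.tendstoUniformlyOn_const _).add
      (fun v hv => (tendsto_add_atTop_nat 1).eventually (hpartial v hv)) |>.congr ?_)
    (Eventually.of_forall fun n u hu => hasDerivAt_logGammaSeq n (ha.trans hu.1))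
    (fun u hu => tendsto_log_gamma (ha.trans hu.1)) (show x ∈ Ioo a (x + 1) from ⟨hax, by linarith⟩)
  refine Eventually.of_forall fun n u _ => ?_
  simp only [Pi.add_apply, Finset.sum_sub_distrib, harmonic]
  push_cast
  ring

lemma hasDerivAt_digamma {x : ℝ} (hx : 0 < x) : HasDerivAt digamma (hurwitzSum 2 x) x := by
  have hpos : ∀ m : ℕ, ∀ y ∈ Ioi (x / 2), 0 < y + m := fun m y (hy : x / 2 < y) =>
    add_pos_of_pos_of_nonneg (by linarith) m.cast_nonneg
  have hx' : x ∈ Ioi (x / 2) := by simp only [mem_Ioi]; linarith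
  have hsummable : Summable fun m : ℕ => ((m : ℝ) + 1)⁻¹ - (x + m)⁻¹ :=
    Summable.of_norm_bounded ((summable_inv_add_pow le_rfl (min x 1)).mul_left |x - 1|)
      fun m => abs_inv_succ_sub_inv_add_le m (by positivity) (min_le_left x 1) (min_le_right x 1)
  have hseries : HasDerivAt (fun y : ℝ => ∑' m : ℕ, (((m : ℝ) + 1)⁻¹ - (y + m)⁻¹))
      (hurwitzSum 2 x) x := by
    refine hasDerivAt_tsum_of_isPreconnected (g' := fun (m : ℕ) (y : ℝ) => ((y + m) ^ 2)⁻¹)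
      (summable_inv_add_pow le_rfl (x / 2)) isOpen_Ioi
      isPreconnected_Ioi (fun m y hy => ?_) (fun m y hy => ?_) hx' hsummable hx'
    · simpa using (hasDerivAt_inv_add_pow 1 m (hpos m y hy).ne').const_sub _
    · have : x / 2 < y := hy
      rw [norm_inv, norm_pow, Real.norm_of_nonneg (hpos m y hy).le]
      gcongr
  refine (hseries.const_add (-eulerMascheroniConstant)).congr_of_eventuallyEq ?_
  filter_upwards [Ioi_mem_nhds hx] with y hy using (hasDerivAt_log_Gamma hy).deriv

open Nat in
lemma polygamma_eq {n : ℕ} (hn : 1 ≤ n) {x : ℝ} (hx : 0 < x) :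
    polygamma n x = (-1) ^ (n + 1) * n ! * hurwitzSum (n + 1) x := by
  induction n, hn using Nat.le_induction generalizing x with
  | base => simp [polygamma, (hasDerivAt_digamma hx).deriv]
  | succ n hn ih =>
    have hloc : polygamma n =ᶠ[𝓝 x] fun y => (-1) ^ (n + 1) * n ! * hurwitzSum (n + 1) y := by
      filter_upwards [Ioi_mem_nhds hx] with y hy using ih hy
    rw [polygamma, iteratedDeriv_succ, ← polygamma, hloc.deriv_eq,
      ((hasDerivAt_hurwitzSum (by omega) hx).const_mul _).deriv, factorial_succ]
    push_cast
    ring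

end Digamma

lemma strictAntiOn_tsum {ι : Type*} [Nonempty ι] {f : ι → ℝ → ℝ} {s : Set ℝ}
    (hf : ∀ i, StrictAntiOn (f i) s) (hsum : ∀ x ∈ s, Summable fun i => f i x) :
    StrictAntiOn (fun x => ∑' i, f i x) s := fun x hx y hy hxy =>
  Summable.tsum_lt_tsum (i := Classical.arbitrary ι) (fun i => (hf i hx hy hxy).le)
    (hf _ hx hy hxy) (hsum y hy) (hsum x hx)

noncomputable def q1Summand (m : ℕ) (x : ℝ) : ℝ :=
  2 * (x^6 + 6*x^5 - 3*x^4 - 16*x^3 - 21*x^2 - 6*x - 1) * ((x + 1 + m) ^ 2)⁻¹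
    - 2 * ((x + 1) * (x^2 + 1) * (x^4 + 4*x^3 - 2*x^2 - 4*x - 3)) * ((x + 1 + m) ^ 3)⁻¹

def q1SummandDerivNum (x a : ℝ) : ℝ :=
  (12*x^5 + 60*x^4 - 24*x^3 - 96*x^2 - 84*x - 12) * a^2
    - (18*x^6 + 84*x^5 + 18*x^4 - 72*x^3 - 114*x^2 - 60*x - 18) * a
    + (6*x^7 + 30*x^6 + 18*x^5 - 6*x^4 - 30*x^3 - 54*x^2 - 42*x - 18)

lemma hasDerivAt_q1Summand (m : ℕ) {x : ℝ} (hx : x + 1 + m ≠ 0) :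
    HasDerivAt (q1Summand m) (q1SummandDerivNum x (x + 1 + m) / (x + 1 + m) ^ 4) x := by
  have hX := hasDerivAt_id' x
  have hP := (((((((hX.pow 6).add ((hX.pow 5).const_mul 6)).sub ((hX.pow 4).const_mul 3)).sub
    ((hX.pow 3).const_mul 16)).sub ((hX.pow 2).const_mul 21)).sub (hX.const_mul 6)).sub_const 1)
  have hQ := ((hX.add_const 1).mul ((hX.pow 2).add_const 1)).mul
    (((((hX.pow 4).add ((hX.pow 3).const_mul 4)).sub ((hX.pow 2).const_mul 2)).sub
      (hX.const_mul 4)).sub_const 3)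
  have ha := (hX.add_const 1).add_const (m : ℝ)
  refine (((hP.const_mul 2).mul ((ha.pow 2).inv (pow_ne_zero _ hx))).sub
    ((hQ.const_mul 2).mul ((ha.pow 3).inv (pow_ne_zero _ hx)))).congr_deriv ?_
  rw [q1SummandDerivNum]
  norm_num
  field_simp
  ring

lemma q1SummandDerivNum_neg {x a : ℝ} (hx0 : 0 ≤ x) (hx1 : x ≤ 1) (ha : x + 1 ≤ a) :
    q1SummandDerivNum x a < 0 := by
  obtain ⟨s, hs, rfl⟩ : ∃ s, 0 ≤ s ∧ a = x + 1 + s := ⟨a - (x + 1), by linarith, by ring⟩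
  have h54 : x^5 ≤ x^4 := pow_le_pow_of_le_one hx0 hx1 (by norm_num)
  have h64 : x^6 ≤ x^4 := pow_le_pow_of_le_one hx0 hx1 (by norm_num)
  have h43 : x^4 ≤ x^3 := pow_le_pow_of_le_one hx0 hx1 (by norm_num)
  have h32 : x^3 ≤ x^2 := pow_le_pow_of_le_one hx0 hx1 (by norm_num)
  have hx3 : 0 ≤ x^3 := by positivity
  have hx2 : 0 ≤ x^2 := by positivity
  have hc2 : 12*x^5 + 60*x^4 - 24*x^3 - 96*x^2 - 84*x - 12 < 0 := by linarith
  have hc1 : 6*x^6 + 60*x^5 + 54*x^4 - 168*x^3 - 246*x^2 - 132*x - 6 < 0 := by linarith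
  have hc0 : 12*x^6 + 24*x^5 - 36*x^4 - 144*x^3 - 156*x^2 - 72*x - 12 < 0 := by linarith
  have hexpand : q1SummandDerivNum x (x + 1 + s) =
      (12*x^6 + 24*x^5 - 36*x^4 - 144*x^3 - 156*x^2 - 72*x - 12)
        + (6*x^6 + 60*x^5 + 54*x^4 - 168*x^3 - 246*x^2 - 132*x - 6) * s
        + (12*x^5 + 60*x^4 - 24*x^3 - 96*x^2 - 84*x - 12) * s^2 := by
    rw [q1SummandDerivNum]
    ring
  rw [hexpand]
  nlinarith [mul_nonpos_of_nonneg_of_nonpos hs hc1.le,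
    mul_nonpos_of_nonneg_of_nonpos (sq_nonneg s) hc2.le]

lemma strictAntiOn_q1Summand (m : ℕ) : StrictAntiOn (q1Summand m) (Icc 0 1) := by
  have hderiv : ∀ x ∈ Icc (0 : ℝ) 1,
      HasDerivAt (q1Summand m) (q1SummandDerivNum x (x + 1 + m) / (x + 1 + m) ^ 4) x :=
    fun x hx => hasDerivAt_q1Summand m (by linarith [hx.1, m.cast_nonneg (α := ℝ)])
  refine strictAntiOn_of_deriv_neg (convex_Icc 0 1)
    (fun x hx => (hderiv x hx).continuousAt.continuousWithinAt) fun x hx => ?_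
  rw [interior_Icc] at hx
  have hx' := Ioo_subset_Icc_self hx
  rw [(hderiv x hx').deriv]
  refine div_neg_of_neg_of_pos (q1SummandDerivNum_neg hx'.1 hx'.2 (by simp))
    (pow_pos (by linarith [hx.1, m.cast_nonneg (α := ℝ)]) 4)

lemma summable_q1Summand (x : ℝ) : Summable fun m => q1Summand m x :=
  ((summable_inv_add_pow le_rfl (x + 1)).mul_left _).sub
    ((summable_inv_add_pow (by norm_num) (x + 1)).mul_left _)

lemma tsum_q1Summand {x : ℝ} (hx : 0 < x + 1) :
    ∑' m : ℕ, q1Summand m x =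
      2 * (x^6 + 6*x^5 - 3*x^4 - 16*x^3 - 21*x^2 - 6*x - 1) * polygamma 1 (x + 1)
        + (x + 1) * (x^2 + 1) * (x^4 + 4*x^3 - 2*x^2 - 4*x - 3) * polygamma 2 (x + 1) := by
  have h1 : polygamma 1 (x + 1) = hurwitzSum 2 (x + 1) := by
    simpa using polygamma_eq le_rfl hx
  have h2 : polygamma 2 (x + 1) = -2 * hurwitzSum 3 (x + 1) := by
    rw [polygamma_eq one_le_two hx]
    norm_num
  simp only [q1Summand]
  rw [Summable.tsum_sub
    ((summable_inv_add_pow le_rfl (x + 1)).mul_left _)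
    ((summable_inv_add_pow (by norm_num) (x + 1)).mul_left _), tsum_mul_left, tsum_mul_left,
    h1, h2, hurwitzSum, hurwitzSum]
  ring

theorem stmt_14 :
    StrictAntiOn
      (fun x : ℝ =>
        2 * (x^6 + 6*x^5 - 3*x^4 - 16*x^3 - 21*x^2 - 6*x - 1) * polygamma 1 (x + 1)
          + (x + 1) * (x^2 + 1) * (x^4 + 4*x^3 - 2*x^2 - 4*x - 3) * polygamma 2 (x + 1))
      (Set.Icc 0 1) :=
  (strictAntiOn_tsum strictAntiOn_q1Summand fun x _ => summable_q1Summand x).congr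
    fun x hx => tsum_q1Summand (by linarith [hx.1])
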